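/- arXiv:2412.03119 — 2 statements merged into one kernel-verified Lean document; each statement's English description precedes it below -/
import Mathlib

section
/- For n ≥ 1, the alternating sum of degenerate Eulerian numbers satisfies ∑_{k=0}^{n} A_λ(n,k) (-1)^k = 2^{n+1} (2^{n+1} β_{n+1,λ/2} - β_{n+1,λ})/(n+1). -/
/-!
Newton's forward-difference formula gives `(j+1)_{n,λ} = ∑_{r ≤ n} C(j,r) Δ^r`, where `Δ^r` is the
`r`-th forward difference of `y ↦ (y)_{n,λ}` at `y = 1`. Since `∑_j C(j,r) x^j = x^r/(1-x)^{r+1}`,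
this turns the defining series into the polynomial identity
`A_{n,λ}(x) = ∑_r Δ^r x^r (1-x)^{n-r}`, which can then be evaluated at `x = -1`.

As `e_λ^{y+1}(t) = e_λ(t) e_λ^y(t)`, the difference `Δ^r` is `n!` times the `t^n`-coefficient of
`(e_λ(t) - 1)^r e_λ(t)`; summing the geometric series in `(1 - e_λ(t))/2` gives
`A_{n,λ}(-1) = 2^n n! [t^n] 2e_λ(t)/(e_λ(t) + 1)`. Finally
`2e/(e+1) = 2 - 2/(e-1) + 4/(e^2-1)` and `e_λ(t)^2 = e_{λ/2}(2t)`, which brings in the degenerate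
Bernoulli numbers at `λ` and `λ/2`.
-/

open Finset PowerSeries

/-- Degenerate falling factorial `(x)_{n,λ} = x(x-λ)⋯(x-(n-1)λ)`. -/
noncomputable def dfall (l x : ℝ) (n : ℕ) : ℝ := ∏ i ∈ Finset.range n, (x - i * l)

/-- Degenerate Eulerian number `A_λ(n,k) = ∑_{i=0}^k C(n+1,i)(-1)^i (k-i+1)_{n,λ}`. -/
noncomputable def degEulerianNum (l : ℝ) (n k : ℕ) : ℝ :=
  ∑ i ∈ Finset.range (k+1), ((n+1).choose i : ℝ) * (-1)^i * dfall l ((k : ℝ) - i + 1) n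

/-- Degenerate Eulerian polynomial `A_{n,λ}(x) = ∑_{k=0}^n A_λ(n,k) x^k`. -/
noncomputable def degEulerianPoly (l : ℝ) (n : ℕ) (x : ℝ) : ℝ :=
  ∑ k ∈ Finset.range (n+1), degEulerianNum l n k * x^k

/-- Generalized binomial coefficient `binom(y,m) = y(y-1)⋯(y-m+1)/m!`. -/
noncomputable def genBinom (y : ℝ) (m : ℕ) : ℝ :=
  (∏ i ∈ Finset.range m, (y - i)) / m.factorial

/-- Degenerate exponential `e_λ^x(t) = ∑_k (x)_{k,λ} t^k/k!` as a formal power series. -/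
noncomputable def degExp (l x : ℝ) : PowerSeries ℝ :=
  PowerSeries.mk fun k => dfall l x k / k.factorial

/-- Degenerate Stirling number of the second kind (explicit formula). -/
noncomputable def degStirling2 (l : ℝ) (n k : ℕ) : ℝ :=
  (-1)^k / k.factorial * ∑ j ∈ Finset.range (k+1), (-1)^j * (k.choose j : ℝ) * dfall l j n

lemma dfall_succ (l x : ℝ) (n : ℕ) : dfall l x (n + 1) = dfall l x n * (x - n * l) :=
  prod_range_succ _ _

lemma dfall_mul (c l x : ℝ) (n : ℕ) : dfall (c * l) (c * x) n = c ^ n * dfall l x n := by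
  induction n with
  | zero => simp [dfall]
  | succ n ih => rw [dfall_succ, dfall_succ, ih]; ring

lemma dfall_add (l x y : ℝ) (n : ℕ) :
    dfall l (x + y) n =
      ∑ ij ∈ antidiagonal n, (n.choose ij.1 : ℝ) * (dfall l x ij.1 * dfall l y ij.2) := by
  induction n with
  | zero => simp [dfall]
  | succ n ih =>
    rw [sum_antidiagonal_choose_succ_mul fun i j => dfall l x i * dfall l y j, dfall_succ, ih,
      sum_mul, ← sum_add_distrib]
    refine sum_congr rfl fun ij hij => ?_
    have hn : ij.1 + ij.2 = n := mem_antidiagonal.mp hij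
    rw [Nat.choose_symm_of_eq_add hn.symm, dfall_succ, dfall_succ, ← hn]
    push_cast
    ring

lemma coeff_degExp (l x : ℝ) (n : ℕ) : coeff n (degExp l x) = dfall l x n / n.factorial :=
  coeff_mk _ _

lemma degExp_mul_degExp (l x y : ℝ) : degExp l x * degExp l y = degExp l (x + y) := by
  ext n
  rw [coeff_mul, coeff_degExp, dfall_add, sum_div]
  refine sum_congr rfl fun ij hij => ?_
  rw [coeff_degExp, coeff_degExp, ← mem_antidiagonal.mp hij, Nat.cast_add_choose]
  field_simp

open fwdDiff

lemma fwdDiff_iter_comp_addMonoidHom {M G H : Type*} [AddCommMonoid M] [AddCommGroup G]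
    [AddCommGroup H] (h : M) (φ : G →+ H) (f : M → G) (r : ℕ) :
    Δ_[h] ^[r] (φ ∘ f) = φ ∘ Δ_[h] ^[r] f := by
  induction r with
  | zero => rfl
  | succ r ih =>
    rw [Function.iterate_succ_apply', Function.iterate_succ_apply', ih]
    ext y
    simp [fwdDiff]

lemma constantCoeff_degExp (l x : ℝ) : constantCoeff (degExp l x) = 1 := by
  simp [← coeff_zero_eq_constantCoeff_apply, coeff_degExp, dfall]

lemma fwdDiff_iter_degExp (l : ℝ) (r : ℕ) :
    Δ_[1] ^[r] (degExp l) = fun y => (degExp l 1 - 1) ^ r * degExp l y := by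
  induction r with
  | zero => simp
  | succ r ih =>
    ext1 y
    rw [Function.iterate_succ_apply', ih]
    simp only [fwdDiff, ← degExp_mul_degExp l y 1]
    ring

lemma fwdDiff_iter_dfall (l : ℝ) (r m : ℕ) (y : ℝ) :
    Δ_[1] ^[r] (dfall l · m) y =
      m.factorial * coeff m ((degExp l 1 - 1) ^ r * degExp l y) := by
  have hcoeff : (dfall l · m) =
      (m.factorial : ℝ) • ((coeff m : ℝ⟦X⟧ →ₗ[ℝ] ℝ).toAddMonoidHom ∘ degExp l) := by
    ext x
    simp [coeff_degExp, mul_div_cancel₀, Nat.factorial_ne_zero]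
  rw [hcoeff, fwdDiff_iter_const_smul, fwdDiff_iter_comp_addMonoidHom, fwdDiff_iter_degExp]
  rfl

lemma coeff_pow_mul_eq_zero {R : Type*} [CommSemiring R] {φ : R⟦X⟧} (hφ : constantCoeff φ = 0)
    (ψ : R⟦X⟧) {m r : ℕ} (h : m < r) : coeff m (φ ^ r * ψ) = 0 :=
  X_pow_dvd_iff.mp ((pow_dvd_pow_of_dvd (X_dvd_iff.mpr hφ) r).mul_right ψ) m h

lemma fwdDiff_iter_dfall_eq_zero (l : ℝ) {m r : ℕ} (h : m < r) (y : ℝ) :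
    Δ_[1] ^[r] (dfall l · m) y = 0 := by
  rw [fwdDiff_iter_dfall, coeff_pow_mul_eq_zero (by simp [constantCoeff_degExp]) _ h, mul_zero]

lemma dfall_natCast_add_one_eq_sum_choose_mul (l : ℝ) (n j : ℕ) :
    dfall l (j + 1) n = ∑ r ∈ range (n + 1), (j.choose r : ℝ) * Δ_[1] ^[r] (dfall l · n) 1 := by
  calc dfall l (j + 1) n
        = ∑ r ∈ range (j + 1), (j.choose r : ℝ) * Δ_[1] ^[r] (dfall l · n) 1 := by
        simpa [add_comm, nsmul_eq_mul] using shift_eq_sum_fwdDiff_iter 1 (dfall l · n) j 1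
    _ = ∑ r ∈ range (j + n + 1), (j.choose r : ℝ) * Δ_[1] ^[r] (dfall l · n) 1 :=
        sum_subset (range_subset_range.mpr (by omega)) fun r _ hr => by
          rw [Nat.choose_eq_zero_of_lt (by simpa using hr), Nat.cast_zero, zero_mul]
    _ = ∑ r ∈ range (n + 1), (j.choose r : ℝ) * Δ_[1] ^[r] (dfall l · n) 1 :=
        (sum_subset (range_subset_range.mpr (by omega)) fun r _ hr => by
          rw [fwdDiff_iter_dfall_eq_zero l (by simpa using hr), mul_zero]).symm

lemma hasSum_choose_mul_pow {𝕜 : Type*} [NormedField 𝕜] [CompleteSpace 𝕜] {x : 𝕜} (hx : ‖x‖ < 1)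
    (r : ℕ) : HasSum (fun j : ℕ => (j.choose r : 𝕜) * x ^ j) (x ^ r / (1 - x) ^ (r + 1)) := by
  rw [← hasSum_nat_add_iff' r]
  have hzero : ∑ j ∈ range r, (j.choose r : 𝕜) * x ^ j = 0 :=
    sum_eq_zero fun j hj => by rw [Nat.choose_eq_zero_of_lt (mem_range.mp hj)]; simp
  rw [hzero, sub_zero]
  have h := (hasSum_choose_mul_geometric_of_norm_lt_one r hx).mul_left (x ^ r)
  rw [mul_one_div] at h
  have hterm : (fun j => x ^ r * (((j + r).choose r : ℕ) * x ^ j)) =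
      fun j => ((j + r).choose r : 𝕜) * x ^ (j + r) := by
    ext j
    ring
  rwa [hterm] at h

lemma hasSum_dfall_mul_pow (l : ℝ) (n : ℕ) {x : ℝ} (hx : |x| < 1) :
    HasSum (fun j : ℕ => dfall l (j + 1) n * x ^ j)
      (∑ r ∈ range (n + 1), Δ_[1] ^[r] (dfall l · n) 1 * (x ^ r / (1 - x) ^ (r + 1))) := by
  have hx' : ‖x‖ < 1 := by rwa [Real.norm_eq_abs]
  refine (hasSum_sum fun r _ => (hasSum_choose_mul_pow hx' r).mul_left
    (Δ_[1] ^[r] (dfall l · n) 1)).congr_fun fun j => ?_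
  rw [dfall_natCast_add_one_eq_sum_choose_mul, sum_mul]
  exact sum_congr rfl fun r _ => by ring

lemma sum_mul_pow_eq_sum_fwdDiff_of_abs_lt (l : ℝ) (n : ℕ) (A : ℕ → ℝ)
    (hA : ∀ x : ℝ, |x| < 1 →
      (1 - x) ^ (n + 1) * (∑' j : ℕ, dfall l ((j : ℝ) + 1) n * x ^ j) =
        ∑ k ∈ Finset.range (n + 1), A k * x ^ k) {x : ℝ} (hx : |x| < 1) :
    ∑ k ∈ range (n + 1), A k * x ^ k =
      ∑ r ∈ range (n + 1), Δ_[1] ^[r] (dfall l · n) 1 * x ^ r * (1 - x) ^ (n - r) := by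
  have hx1 : 1 - x ≠ 0 := sub_ne_zero.mpr (abs_lt.mp hx).2.ne'
  rw [← hA x hx, (hasSum_dfall_mul_pow l n hx).tsum_eq, mul_sum]
  refine sum_congr rfl fun r hr => ?_
  rw [show n + 1 = (r + 1) + (n - r) by have := mem_range.mp hr; omega, pow_add]
  field_simp

lemma sum_mul_neg_one_pow_eq_sum_fwdDiff (l : ℝ) (n : ℕ) (A : ℕ → ℝ)
    (hA : ∀ x : ℝ, |x| < 1 →
      (1 - x) ^ (n + 1) * (∑' j : ℕ, dfall l ((j : ℝ) + 1) n * x ^ j) =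
        ∑ k ∈ Finset.range (n + 1), A k * x ^ k) :
    ∑ k ∈ range (n + 1), A k * (-1) ^ k =
      2 ^ n * ∑ r ∈ range (n + 1), Δ_[1] ^[r] (dfall l · n) 1 * (-2⁻¹) ^ r := by
  set P : Polynomial ℝ := ∑ k ∈ range (n + 1), Polynomial.C (A k) * Polynomial.X ^ k
  set Q : Polynomial ℝ := ∑ r ∈ range (n + 1),
    Polynomial.C (Δ_[1] ^[r] (dfall l · n) 1) * Polynomial.X ^ r * (1 - Polynomial.X) ^ (n - r)
  have hPQ : P = Q := by
    refine Polynomial.eq_of_infinite_eval_eq P Q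
      ((Set.Ioo_infinite (by norm_num : (-1 : ℝ) < 1)).mono fun x hx => ?_)
    simpa [P, Q, Polynomial.eval_finsetSum] using
      sum_mul_pow_eq_sum_fwdDiff_of_abs_lt l n A hA (abs_lt.mpr hx)
  have hP1 := congrArg (Polynomial.eval (-1)) hPQ
  simp only [P, Q, Polynomial.eval_finsetSum, Polynomial.eval_mul, Polynomial.eval_pow,
    Polynomial.eval_C, Polynomial.eval_X, Polynomial.eval_sub, Polynomial.eval_one] at hP1
  rw [hP1, mul_sum]
  refine sum_congr rfl fun r hr => ?_
  obtain ⟨s, rfl⟩ := Nat.exists_eq_add_of_le (Nat.lt_succ_iff.mp (mem_range.mp hr))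
  rw [Nat.add_sub_cancel_left, pow_add, show (-2⁻¹ : ℝ) = -1 * 2⁻¹ by ring, mul_pow, inv_pow]
  field_simp
  norm_num

lemma coeff_mul_inv_one_sub {k : Type*} [Field k] {q : k⟦X⟧} (hq : constantCoeff q = 0)
    (φ : k⟦X⟧) {m M : ℕ} (h : m < M) :
    coeff m (φ * (1 - q)⁻¹) = coeff m (φ * ∑ r ∈ range M, q ^ r) := by
  have hunit : (1 - q) * (1 - q)⁻¹ = 1 := PowerSeries.mul_inv_cancel _ (by simp [hq])
  have htail : φ * ∑ r ∈ range M, q ^ r = φ * (1 - q)⁻¹ - q ^ M * (φ * (1 - q)⁻¹) := by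
    linear_combination
      (-(φ * ∑ r ∈ range M, q ^ r)) * hunit + (φ * (1 - q)⁻¹) * mul_neg_geom_sum q M
  rw [htail, map_sub, coeff_pow_mul_eq_zero hq _ h, sub_zero]

/-- `2 e_λ(t) / (e_λ(t) + 1)`, written as `e_λ(t) / (1 - q)` with `q = (1 - e_λ(t)) / 2` so that it
expands as a geometric series in `q`. -/
noncomputable def degEulerGen (l : ℝ) : ℝ⟦X⟧ := degExp l 1 * (1 - C 2⁻¹ * (1 - degExp l 1))⁻¹

lemma one_add_degExp_mul_degEulerGen (l : ℝ) :
    (1 + degExp l 1) * degEulerGen l = 2 * degExp l 1 := by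
  set E := degExp l 1
  have hunit := PowerSeries.mul_inv_cancel (1 - C 2⁻¹ * (1 - E)) (by simp [E, constantCoeff_degExp])
  have htwo : (2 : ℝ⟦X⟧) * C 2⁻¹ = 1 := by
    rw [← map_ofNat C 2, ← map_mul]
    norm_num
  rw [degEulerGen]
  linear_combination (2 * E) * hunit + ((1 - E) * E * (1 - C 2⁻¹ * (1 - E))⁻¹) * htwo

lemma sum_fwdDiff_dfall_mul_neg_half_pow (l : ℝ) (n : ℕ) :
    ∑ r ∈ range (n + 1), Δ_[1] ^[r] (dfall l · n) 1 * (-2⁻¹) ^ r =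
      n.factorial * coeff n (degEulerGen l) := by
  rw [degEulerGen, coeff_mul_inv_one_sub (by simp [constantCoeff_degExp]) _ (Nat.lt_succ_self n),
    mul_sum, map_sum, mul_sum]
  refine sum_congr rfl fun r _ => ?_
  have hterm : degExp l 1 * (C 2⁻¹ * (1 - degExp l 1)) ^ r =
      C ((-2⁻¹) ^ r) * ((degExp l 1 - 1) ^ r * degExp l 1) := by
    rw [map_pow, map_neg, show C 2⁻¹ * (1 - degExp l 1) = -C 2⁻¹ * (degExp l 1 - 1) by ring,
      mul_pow]
    ring
  rw [hterm, coeff_C_mul, fwdDiff_iter_dfall]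
  ring

lemma rescale_two_degExp_half (l : ℝ) : rescale 2 (degExp (l / 2) 1) = degExp l 1 ^ 2 := by
  rw [sq, degExp_mul_degExp]
  ext m
  rw [coeff_rescale, coeff_degExp, coeff_degExp, ← mul_div_assoc, ← dfall_mul,
    mul_div_cancel₀ l two_ne_zero]
  norm_num

lemma X_mul_degEulerGen (l : ℝ) (b : ℝ → ℕ → ℝ)
    (hb : ∀ μ : ℝ, (PowerSeries.X : PowerSeries ℝ) =
      (degExp μ 1 - 1) * PowerSeries.mk (fun m => b μ m / m.factorial)) :
    X * degEulerGen l = 2 * (X + rescale 2 (PowerSeries.mk fun m => b (l / 2) m / m.factorial) -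
      PowerSeries.mk fun m => b l m / m.factorial) := by
  set E := degExp l 1
  have hhalf := congrArg (rescale 2) (hb (l / 2))
  rw [map_mul, map_sub, map_one, rescale_X, rescale_two_degExp_half, map_ofNat] at hhalf
  have hE : (E - 1) * (1 + E) ≠ 0 := by
    refine mul_ne_zero (fun h => ?_) (fun h => ?_)
    · simpa [E, coeff_degExp, dfall] using congrArg (coeff 1) h
    · simpa [E, constantCoeff_degExp] using congrArg constantCoeff h
  refine mul_left_cancel₀ hE ?_
  linear_combination
    (E - 1) * X * one_add_degExp_mul_degEulerGen l + 2 * hhalf - 2 * (1 + E) * hb l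

lemma coeff_degEulerGen (l : ℝ) (b : ℝ → ℕ → ℝ)
    (hb : ∀ μ : ℝ, (PowerSeries.X : PowerSeries ℝ) =
      (degExp μ 1 - 1) * PowerSeries.mk (fun m => b μ m / m.factorial))
    {n : ℕ} (hn : 1 ≤ n) :
    coeff n (degEulerGen l) =
      2 * (2 ^ (n + 1) * b (l / 2) (n + 1) - b l (n + 1)) / (n + 1).factorial := by
  have h := congrArg (coeff (n + 1)) (X_mul_degEulerGen l b hb)
  rw [coeff_succ_X_mul] at h
  rw [h, ← map_ofNat C 2, coeff_C_mul, map_sub, map_add, coeff_X, if_neg (by omega),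
    coeff_rescale, coeff_mk, coeff_mk]
  norm_num
  ring

/-- with `A k` the degenerate Eulerian numbers (coefficients of the
degenerate Eulerian polynomial) and `b μ m` the degenerate Bernoulli numbers,
for `n ≥ 1`: `∑_{k=0}^n A_λ(n,k)(-1)^k = 2^{n+1}(2^{n+1}β_{n+1,λ/2} - β_{n+1,λ})/(n+1)`. -/
theorem stmt6 (l : ℝ) (n : ℕ) (hn : 1 ≤ n) (A : ℕ → ℝ)
    (hA : ∀ x : ℝ, |x| < 1 →
      (1 - x) ^ (n + 1) * (∑' j : ℕ, dfall l ((j : ℝ) + 1) n * x ^ j) =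
        ∑ k ∈ Finset.range (n + 1), A k * x ^ k)
    (b : ℝ → ℕ → ℝ)
    (hb : ∀ μ : ℝ, (PowerSeries.X : PowerSeries ℝ) =
      (degExp μ 1 - 1) * PowerSeries.mk (fun m => b μ m / m.factorial)) :
    ∑ k ∈ Finset.range (n + 1), A k * (-1)^k =
      2 ^ (n + 1) * (2 ^ (n + 1) * b (l / 2) (n + 1) - b l (n + 1)) / (n + 1) := by
  rw [sum_mul_neg_one_pow_eq_sum_fwdDiff l n A hA, sum_fwdDiff_dfall_mul_neg_half_pow,
    coeff_degEulerGen l b hb hn, Nat.factorial_succ]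
  push_cast
  field_simp
  ring
end

section
/- For |x| < 1 and n ≥ 1: ∑_{k=1}^∞ (k)_{n,λ} x^k = (1/(1-x)^{n+1}) · ∑_{k=1}^{n} A_λ(n, k-1) x^k. -/
open Finset PowerSeries

/-! Multiplying `∑ₖ (k+1)_{n,λ} xᵏ` by `(1-x)^{n+1} = ∑ᵢ (-1)ⁱ C(n+1,i) xⁱ` gives, by the Cauchy
product, the series `∑ₘ A_λ(n,m) xᵐ`. Its coefficients vanish for `m ≥ n`: for `m > n`,
`A_λ(n,m)` is an `(n+1)`-st finite difference of the degree-`n` polynomial `t ↦ (t)_{n,λ}`, and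
`A_λ(n,n)` differs from such a difference only by a multiple of `(0)_{n,λ} = 0`. -/

theorem Polynomial.sum_range_choose_mul_neg_one_pow_eval_sub {R : Type*} [CommRing R]
    (P : Polynomial R) {n : ℕ} (hP : P.natDegree < n) (y : R) :
    ∑ i ∈ range (n + 1), (n.choose i : R) * (-1) ^ i * P.eval (y - i) = 0 := by
  have h := congr_fun (fwdDiff_iter_eq_zero_of_degree_lt hP) (y - n)
  rw [fwdDiff_iter_eq_sum_shift, ← sum_range_reflect, Pi.zero_apply] at h
  rw [← h]
  refine sum_congr rfl fun i hi => ?_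
  have hi : i ≤ n := Nat.lt_succ_iff.mp (mem_range.mp hi)
  rw [add_tsub_cancel_right, Nat.sub_sub_self hi, Nat.choose_symm hi, zsmul_eq_mul, nsmul_eq_mul,
    Nat.cast_sub hi]
  push_cast
  ring_nf

noncomputable def dfallPoly (l : ℝ) (n : ℕ) : Polynomial ℝ :=
  ∏ i ∈ range n, (Polynomial.X - Polynomial.C (i * l))

theorem eval_dfallPoly (l x : ℝ) (n : ℕ) : (dfallPoly l n).eval x = dfall l x n := by
  simp [dfallPoly, dfall, Polynomial.eval_prod]

theorem natDegree_dfallPoly (l : ℝ) (n : ℕ) : (dfallPoly l n).natDegree = n :=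
  Polynomial.natDegree_finsetProd_X_sub_C_eq_card _ _ |>.trans (card_range n)

theorem sum_range_choose_mul_neg_one_pow_dfall_sub (l y : ℝ) (n : ℕ) :
    ∑ i ∈ range (n + 2), ((n + 1).choose i : ℝ) * (-1) ^ i * dfall l (y - i) n = 0 := by
  simpa [eval_dfallPoly] using (dfallPoly l n).sum_range_choose_mul_neg_one_pow_eval_sub
    (by rw [natDegree_dfallPoly]; exact n.lt_succ_self) y

theorem degEulerianNum_eq_zero_of_le {l : ℝ} {n m : ℕ} (hn : 1 ≤ n) (h : n ≤ m) :
    degEulerianNum l n m = 0 := by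
  have hvanish := sum_range_choose_mul_neg_one_pow_dfall_sub l ((m : ℝ) + 1) n
  simp only [← sub_add_eq_add_sub] at hvanish
  rcases h.eq_or_lt with rfl | hlt
  · rw [sum_range_succ] at hvanish
    have hzero : dfall l ((n : ℝ) - (n + 1 : ℕ) + 1) n = 0 :=
      prod_eq_zero (mem_range.mpr hn) (by push_cast; ring)
    rwa [hzero, mul_zero, add_zero] at hvanish
  · rw [degEulerianNum, ← hvanish]
    refine (sum_subset (range_subset_range.mpr (by omega)) fun i _ hi => ?_).symm
    rw [Nat.choose_eq_zero_of_lt (by simp only [mem_range] at hi; omega)]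
    simp

theorem Polynomial.summable_eval_mul_pow {R : Type*} [NormedRing R] [HasSummableGeomSeries R]
    (P : Polynomial R) {r : R} (hr : ‖r‖ < 1) :
    Summable fun k : ℕ => P.eval (k : R) * r ^ k := by
  simp_rw [Polynomial.eval_eq_sum_range, sum_mul, mul_assoc]
  exact summable_sum fun j _ => (summable_pow_mul_geometric_of_norm_lt_one j hr).mul_left _

theorem sum_range_mul_tsum_eq_tsum_sum_range {R : Type*} [NormedRing R] [CompleteSpace R]
    {f g : ℕ → R} {N : ℕ} (hf : ∀ i, N ≤ i → f i = 0) (hg : Summable fun k => ‖g k‖) :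
    (∑ i ∈ range N, f i) * ∑' k, g k = ∑' m, ∑ i ∈ range (m + 1), f i * g (m - i) := by
  have hf' : ∀ i ∉ range N, f i = 0 := fun i hi => hf i (by simpa using hi)
  have htsum : ∑' i, f i = ∑ i ∈ range N, f i := tsum_eq_sum hf'
  rw [← htsum]
  exact tsum_mul_tsum_eq_tsum_sum_range_of_summable_norm
    (summable_of_ne_finset_zero (s := range N) fun i hi => by rw [hf' i hi, norm_zero]) hg

theorem summable_dfall_add_one_mul_pow (l : ℝ) (n : ℕ) {x : ℝ} (hx : |x| < 1) :
    Summable fun k : ℕ => dfall l ((k : ℝ) + 1) n * x ^ k := by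
  refine (((dfallPoly l n).comp (Polynomial.X + 1)).summable_eval_mul_pow hx).congr fun k => ?_
  rw [Polynomial.eval_comp, eval_dfallPoly, Polynomial.eval_add, Polynomial.eval_X,
    Polynomial.eval_one]

theorem one_sub_pow_mul_tsum_dfall (l : ℝ) (n : ℕ) {x : ℝ} (hx : |x| < 1) :
    (1 - x) ^ (n + 1) * ∑' k : ℕ, dfall l ((k : ℝ) + 1) n * x ^ k =
      ∑' m : ℕ, degEulerianNum l n m * x ^ m := by
  have hbinom : (1 - x) ^ (n + 1) =
      ∑ i ∈ range (n + 2), ((n + 1).choose i : ℝ) * (-1) ^ i * x ^ i := by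
    rw [sub_eq_neg_add, add_pow]
    refine sum_congr rfl fun i _ => ?_
    rw [neg_pow, one_pow, mul_one]
    ring
  have hsummable : Summable fun k : ℕ => ‖dfall l ((k : ℝ) + 1) n * x ^ k‖ := by
    simpa only [Real.norm_eq_abs] using (summable_dfall_add_one_mul_pow l n hx).abs
  rw [hbinom, sum_range_mul_tsum_eq_tsum_sum_range
    (fun i hi => by rw [Nat.choose_eq_zero_of_lt (by omega), Nat.cast_zero, zero_mul, zero_mul])
    hsummable]
  refine tsum_congr fun m => ?_
  rw [degEulerianNum, sum_mul]
  refine sum_congr rfl fun i hi => ?_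
  have hi : i ≤ m := Nat.lt_succ_iff.mp (mem_range.mp hi)
  rw [Nat.cast_sub hi, ← pow_mul_pow_sub x hi]
  ring_nf

theorem tsum_degEulerianNum_mul_pow (l x : ℝ) {n : ℕ} (hn : 1 ≤ n) :
    ∑' m : ℕ, degEulerianNum l n m * x ^ m = ∑ m ∈ range n, degEulerianNum l n m * x ^ m :=
  tsum_eq_sum fun m hm => by
    rw [degEulerianNum_eq_zero_of_le hn (by simpa using hm), zero_mul]

/-- for `|x| < 1` and `n ≥ 1`:
`∑_{k=1}^∞ (k)_{n,λ} x^k = (1/(1-x)^{n+1}) ∑_{k=1}^n A_λ(n,k-1) x^k`. -/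
theorem stmt18 (l : ℝ) (n : ℕ) (hn : 1 ≤ n) (x : ℝ) (hx : |x| < 1) :
    ∑' k : ℕ, dfall l ((k : ℝ) + 1) n * x ^ (k + 1) =
      (1 / (1 - x) ^ (n + 1)) * ∑ k ∈ Finset.Icc 1 n, degEulerianNum l n (k - 1) * x ^ k := by
  have hpow : (1 - x) ^ (n + 1) ≠ 0 := pow_ne_zero _ (sub_ne_zero.mpr (abs_lt.mp hx).2.ne')
  have hshift : ∑' k : ℕ, dfall l ((k : ℝ) + 1) n * x ^ (k + 1) =
      x * ∑' k : ℕ, dfall l ((k : ℝ) + 1) n * x ^ k := by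
    rw [← tsum_mul_left]
    exact tsum_congr fun k => by ring
  have hreindex : ∑ k ∈ Icc 1 n, degEulerianNum l n (k - 1) * x ^ k =
      x * ∑ m ∈ range n, degEulerianNum l n m * x ^ m := by
    rw [← Ico_add_one_right_eq_Icc, sum_Ico_eq_sum_range, mul_sum, add_tsub_cancel_right]
    exact sum_congr rfl fun m _ => by rw [add_tsub_cancel_left]; ring
  rw [hshift, hreindex, ← tsum_degEulerianNum_mul_pow l x hn, ← one_sub_pow_mul_tsum_dfall l n hx]
  field_simp
end
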